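/- Let Ω ⊆ ℂ be a bounded domain, let G be a Green's function for Ω, and let f : Ω → ℂ be holomorphic with |f(z)| < 1 for all z ∈ Ω and such that f⁻¹(C) is compact for every compact subset C of {w ∈ ℂ : |w| < 1}. Suppose the zeros of f in Ω, listed with multiplicity, are a₀, a₁, …, a_{n−1}; that is, f(z) = 0 exactly for z ∈ {a₀, …, a_{n−1}}, and for each such z₀ the order of vanishing of f at z₀ equals the number of indices j with a_j = z₀. Then for every z ∈ Ω with f(z) ≠ 0: log|f(z)| = −Σ_{j=0}^{n−1} G(z,a_j). -/

import Mathlib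

open MeasureTheory Complex Set Metric ComplexConjugate Filter

noncomputable section

/-- `u` is harmonic on `Ω`: every point of `Ω` has a neighborhood on which `u` is the real
part of some holomorphic function. -/
def HarmonicOnSet (u : ℂ → ℝ) (Ω : Set ℂ) : Prop :=
  ∀ z ∈ Ω, ∃ ε > 0, Metric.ball z ε ⊆ Ω ∧ ∃ F : ℂ → ℂ,
    DifferentiableOn ℂ F (Metric.ball z ε) ∧ ∀ w ∈ Metric.ball z ε, u w = (F w).re

/-- `G` is a Green's function for `Ω`. -/
structure IsGreensFunction (Ω : Set ℂ) (G : ℂ → ℂ → ℝ) : Prop where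
  harmonic_ext : ∀ a ∈ Ω, ∃ u : ℂ → ℝ, HarmonicOnSet u Ω ∧
    ∀ z ∈ Ω, z ≠ a → u z = G z a + Real.log (‖z - a‖)
  boundary_limit : ∀ a ∈ Ω, ∀ ζ ∈ frontier Ω,
    Filter.Tendsto (fun z => G z a) (nhdsWithin ζ Ω) (nhds 0)

lemma HarmonicOnSet.continuousAt {u : ℂ → ℝ} {Ω : Set ℂ} (hu : HarmonicOnSet u Ω)
    {z : ℂ} (hz : z ∈ Ω) : ContinuousAt u z := by
  obtain ⟨ε, hε, hball, F, hF, hFu⟩ := hu z hz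
  have h1 : ContinuousOn (fun w => (F w).re) (Metric.ball z ε) :=
    Complex.continuous_re.comp_continuousOn hF.continuousOn
  have h2 : ContinuousOn u (Metric.ball z ε) := h1.congr hFu
  exact h2.continuousAt (Metric.ball_mem_nhds z hε)

lemma HarmonicOnSet.neg {u : ℂ → ℝ} {Ω : Set ℂ} (hu : HarmonicOnSet u Ω) :
    HarmonicOnSet (fun z => -u z) Ω := by
  intro z hz
  obtain ⟨ε, hε, hball, F, hF, hFu⟩ := hu z hz
  exact ⟨ε, hε, hball, fun w => -F w, hF.neg, fun w hw => by simp [hFu w hw]⟩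

lemma HarmonicOnSet.add {u v : ℂ → ℝ} {Ω : Set ℂ} (hu : HarmonicOnSet u Ω)
    (hv : HarmonicOnSet v Ω) : HarmonicOnSet (fun z => u z + v z) Ω := by
  intro z hz
  obtain ⟨ε₁, hε₁, hball₁, F₁, hF₁, hFu₁⟩ := hu z hz
  obtain ⟨ε₂, hε₂, hball₂, F₂, hF₂, hFu₂⟩ := hv z hz
  refine ⟨min ε₁ ε₂, lt_min hε₁ hε₂, ?_, fun w => F₁ w + F₂ w, ?_, ?_⟩
  · exact (Metric.ball_subset_ball (min_le_left _ _)).trans hball₁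
  · exact (hF₁.mono (Metric.ball_subset_ball (min_le_left _ _))).add
      (hF₂.mono (Metric.ball_subset_ball (min_le_right _ _)))
  · intro w hw
    have h1 := hFu₁ w (Metric.ball_subset_ball (min_le_left _ _) hw)
    have h2 := hFu₂ w (Metric.ball_subset_ball (min_le_right _ _) hw)
    simp [h1, h2]

lemma harmonicOnSet_const {Ω : Set ℂ} (hop : IsOpen Ω) (c : ℝ) :
    HarmonicOnSet (fun _ => c) Ω := by
  intro z hz
  obtain ⟨ε, hε, hball⟩ := Metric.isOpen_iff.mp hop z hz
  exact ⟨ε, hε, hball, fun _ => (c : ℂ), differentiableOn_const _, fun w _ => by simp⟩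

lemma harmonicOnSet_sum {Ω : Set ℂ} (hop : IsOpen Ω) {ι : Type*} (s : Finset ι)
    (U : ι → ℂ → ℝ) (hU : ∀ j ∈ s, HarmonicOnSet (U j) Ω) :
    HarmonicOnSet (fun z => ∑ j ∈ s, U j z) Ω := by
  classical
  induction s using Finset.induction_on with
  | empty => simpa using harmonicOnSet_const hop 0
  | insert i s hj ih =>
    have h1 : HarmonicOnSet (fun z => U i z + ∑ j ∈ s, U j z) Ω :=
      (hU i (Finset.mem_insert_self i s)).add
        (ih fun j hjs => hU j (Finset.mem_insert_of_mem hjs))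
    simpa [Finset.sum_insert hj] using h1

/-- Constructor from local data near each point. -/
lemma harmonicOnSet_of_locally {u : ℂ → ℝ} {Ω : Set ℂ} (hop : IsOpen Ω)
    (h : ∀ z ∈ Ω, ∃ s ∈ nhds z, ∃ F : ℂ → ℂ,
      (∀ w ∈ s, DifferentiableAt ℂ F w) ∧ ∀ w ∈ s, u w = (F w).re) :
    HarmonicOnSet u Ω := by
  intro z hz
  obtain ⟨s, hs, F, hF, hFu⟩ := h z hz
  obtain ⟨ε, hε, hball⟩ := Metric.isOpen_iff.mp (hop.inter (isOpen_interior (s := s)))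
    z ⟨hz, mem_interior_iff_mem_nhds.mpr hs⟩
  refine ⟨ε, hε, hball.trans (Set.inter_subset_left), F, ?_, ?_⟩
  · intro w hw
    exact (hF w (interior_subset (hball hw).2)).differentiableWithinAt
  · intro w hw
    exact hFu w (interior_subset (hball hw).2)


lemma harmonic_isOpen_eq_max {u : ℂ → ℝ} {Ω : Set ℂ} (hu : HarmonicOnSet u Ω)
    {M : ℝ} (hle : ∀ z ∈ Ω, u z ≤ M) : IsOpen {z ∈ Ω | u z = M} := by
  rw [Metric.isOpen_iff]
  rintro z ⟨hz, hzM⟩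
  obtain ⟨ε, hε, hball, F, hF, hFu⟩ := hu z hz
  refine ⟨ε, hε, fun w hw => ⟨hball hw, ?_⟩⟩
  have hzb : z ∈ Metric.ball z ε := Metric.mem_ball_self hε
  -- exp ∘ F has max modulus at z on the ball
  have hmax : IsMaxOn (norm ∘ fun w => Complex.exp (F w)) (Metric.ball z ε) z := by
    intro x hx
    simp only [Function.comp_apply, Complex.norm_exp, Set.mem_setOf_eq]
    have h1 : u x ≤ u z := by rw [hzM]; exact hle x (hball hx)
    rw [hFu x hx, hFu z hzb] at h1
    exact Real.exp_le_exp.mpr h1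
  have heq := Complex.eqOn_of_isPreconnected_of_isMaxOn_norm
    (convex_ball z ε).isPreconnected Metric.isOpen_ball
    (Complex.differentiable_exp.comp_differentiableOn hF) hzb hmax
  have h2 : Complex.exp (F w) = Complex.exp (F z) := heq hw
  have h3 : Real.exp ((F w).re) = Real.exp ((F z).re) := by
    have := congrArg norm h2
    simpa [Complex.norm_exp] using this
  have h4 : (F w).re = (F z).re := Real.exp_injective h3
  rw [hFu w hw, h4, ← hFu z hzb, hzM]

/-- If a harmonic function on a bounded domain tends to `0` at every boundary point,
then it is `≤ 0`. -/
lemma harmonic_nonpos_of_boundary {u : ℂ → ℝ} {Ω : Set ℂ} (hne : Ω.Nonempty)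
    (hop : IsOpen Ω) (hconn : IsConnected Ω) (hbd : Bornology.IsBounded Ω)
    (hu : HarmonicOnSet u Ω)
    (hb : ∀ ζ ∈ frontier Ω, Tendsto u (nhdsWithin ζ Ω) (nhds 0)) :
    ∀ z ∈ Ω, u z ≤ 0 := by
  classical
  set v : ℂ → ℝ := fun z => if z ∈ Ω then u z else 0 with hv
  have hvΩ : ∀ z ∈ Ω, v z = u z := fun z hz => if_pos hz
  have hcl : IsCompact (closure Ω) := Metric.isCompact_of_isClosed_isBounded isClosed_closure hbd.closure
  have hclne : (closure Ω).Nonempty := hne.closure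
  -- continuity of v on closure Ω
  have hvc : ContinuousOn v (closure Ω) := by
    intro z hz
    by_cases hzΩ : z ∈ Ω
    · have : ContinuousAt v z := by
        have := hu.continuousAt hzΩ
        apply this.congr
        filter_upwards [hop.mem_nhds hzΩ] with w hw using (hvΩ w hw).symm
      exact this.continuousWithinAt
    · have hzfr : z ∈ frontier Ω := ⟨hz, fun h => hzΩ (interior_subset h)⟩
      have hvz : v z = 0 := if_neg hzΩ
      rw [ContinuousWithinAt, hvz]
      have hsplit : closure Ω = Ω ∪ (closure Ω \ Ω) :=
        (Set.union_diff_cancel subset_closure).symm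
      rw [hsplit, nhdsWithin_union]
      rw [Filter.tendsto_sup]
      constructor
      · apply Filter.Tendsto.congr' _ (hb z hzfr)
        filter_upwards [self_mem_nhdsWithin] with w hw using (hvΩ w hw).symm
      · have : ∀ w ∈ closure Ω \ Ω, v w = 0 := fun w hw => if_neg hw.2
        apply Filter.Tendsto.congr' _ tendsto_const_nhds
        filter_upwards [self_mem_nhdsWithin] with w hw using (this w hw).symm
  obtain ⟨p, hp, hmax⟩ := hcl.exists_isMaxOn hclne hvc
  by_cases hpΩ : p ∈ Ω
  · -- interior max; if positive, u constant, contradiction with boundary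
    set M := u p with hM
    have hle : ∀ z ∈ Ω, u z ≤ M := by
      intro z hz
      have := hmax (subset_closure hz)
      simpa [hvΩ z hz, hvΩ p hpΩ] using this
    by_cases hM0 : M ≤ 0
    · exact fun z hz => le_trans (hle z hz) hM0
    push_neg at hM0
    exfalso
    -- u ≡ M on Ω by connectedness
    have hS : IsOpen {z ∈ Ω | u z = M} := harmonic_isOpen_eq_max hu hle
    have hT : IsOpen {z ∈ Ω | u z < M} := by
      have : ContinuousOn u Ω := fun z hz => (hu.continuousAt hz).continuousWithinAt
      have h2 := this.isOpen_inter_preimage hop isOpen_Iio (t := Set.Iio M)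
      have h3 : {z ∈ Ω | u z < M} = Ω ∩ u ⁻¹' Set.Iio M := by
        ext z; simp [Set.mem_setOf_eq]
      rw [h3]; exact h2
    have hall : ∀ z ∈ Ω, u z = M := by
      by_contra hcon
      push_neg at hcon
      obtain ⟨x, hxΩ, hxne⟩ := hcon
      obtain ⟨y, hy⟩ := hconn.isPreconnected {z ∈ Ω | u z = M} {z ∈ Ω | u z < M}
        hS hT (fun z hz => by
          rcases lt_or_eq_of_le (hle z hz) with h | h
          · exact Or.inr ⟨hz, h⟩
          · exact Or.inl ⟨hz, h⟩)
        ⟨p, hpΩ, hpΩ, rfl⟩ ⟨x, hxΩ, hxΩ, lt_of_le_of_ne (hle x hxΩ) hxne⟩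
      exact absurd hy.2.1.2 (by simpa using hy.2.2.2.ne)
    -- boundary point exists
    have hfr : (frontier Ω).Nonempty := by
      rw [nonempty_frontier_iff]
      refine ⟨hne, fun h => ?_⟩
      rw [h] at hbd
      obtain ⟨R, hR⟩ := hbd.subset_closedBall 0
      have hm := hR (Set.mem_univ ((max R 0 + 1 : ℝ) : ℂ))
      rw [Metric.mem_closedBall, dist_zero_right] at hm
      have : ‖((max R 0 + 1 : ℝ) : ℂ)‖ = max R 0 + 1 := by
        rw [Complex.norm_real, Real.norm_eq_abs, abs_of_pos]
        positivity
      rw [this] at hm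
      have : R ≤ max R 0 := le_max_left _ _
      linarith
    obtain ⟨ζ, hζ⟩ := hfr
    have hnb : (nhdsWithin ζ Ω).NeBot :=
      mem_closure_iff_nhdsWithin_neBot.mp hζ.1
    have htM : Tendsto u (nhdsWithin ζ Ω) (nhds M) := by
      apply Filter.Tendsto.congr' _ (tendsto_const_nhds (x := M))
      filter_upwards [self_mem_nhdsWithin] with w hw using (hall w hw).symm
    exact hM0.ne' (tendsto_nhds_unique htM (hb ζ hζ))
  · intro z hz
    have h1 := hmax (subset_closure hz)
    have h2 : v p = 0 := if_neg hpΩ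
    have h3 : v z = u z := hvΩ z hz
    simp only [Set.mem_setOf_eq, h2, h3] at h1
    exact h1


lemma harmonic_zero_of_boundary {u : ℂ → ℝ} {Ω : Set ℂ} (hne : Ω.Nonempty)
    (hop : IsOpen Ω) (hconn : IsConnected Ω) (hbd : Bornology.IsBounded Ω)
    (hu : HarmonicOnSet u Ω)
    (hb : ∀ ζ ∈ frontier Ω, Tendsto u (nhdsWithin ζ Ω) (nhds 0)) :
    ∀ z ∈ Ω, u z = 0 := by
  intro z hz
  have h1 := harmonic_nonpos_of_boundary hne hop hconn hbd hu hb z hz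
  have h2 := harmonic_nonpos_of_boundary hne hop hconn hbd hu.neg
    (fun ζ hζ => by simpa using (hb ζ hζ).neg) z hz
  simp only [neg_nonpos] at h2
  linarith

/-- `log |f|` is minus the sum of the Green's functions at the zeroes of a
proper holomorphic map `f` of `Ω` onto the unit disc, counted with multiplicity. -/
theorem log_abs_proper_map_eq_neg_sum_green
    (Ω : Set ℂ) (hne : Ω.Nonempty) (hop : IsOpen Ω) (hconn : IsConnected Ω)
    (hbd : Bornology.IsBounded Ω)
    (G : ℂ → ℂ → ℝ) (hG : IsGreensFunction Ω G)
    (f : ℂ → ℂ) (hf : DifferentiableOn ℂ f Ω)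
    (hlt : ∀ z ∈ Ω, ‖f z‖ < 1)
    (hproper : ∀ C : Set ℂ, IsCompact C → C ⊆ Metric.ball (0:ℂ) 1 →
      IsCompact {z ∈ Ω | f z ∈ C})
    (n : ℕ) (a : Fin n → ℂ) (ha : ∀ j, a j ∈ Ω)
    (hzeros : ∀ z ∈ Ω, (f z = 0 ↔ ∃ j, z = a j))
    (hmult : ∀ z₀ ∈ Ω, f z₀ = 0 → ∃ u : ℂ → ℂ, AnalyticAt ℂ u z₀ ∧ u z₀ ≠ 0 ∧
      ∀ᶠ z in nhds z₀, f z = (z - z₀) ^ ({j : Fin n | a j = z₀}.ncard) * u z) :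
    ∀ z ∈ Ω, f z ≠ 0 → Real.log (‖f z‖) = -∑ j, G z (a j) := by
  classical
  set P : ℂ → ℂ := fun w => ∏ j, (w - a j) with hPdef
  have hPdiff : Differentiable ℂ P := by
    apply Differentiable.fun_finsetProd
    intro j _
    exact differentiable_id.sub_const _
  have hPne : ∀ z ∈ Ω, f z ≠ 0 → P z ≠ 0 := by
    intro z hz hfz
    have hnot : ¬ ∃ j, z = a j := fun h => hfz ((hzeros z hz).mpr h)
    push_neg at hnot
    exact Finset.prod_ne_zero_iff.mpr fun j _ => sub_ne_zero.mpr (hnot j)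
  set g : ℂ → ℂ := fun z => limUnder (nhdsWithin z {z}ᶜ) (fun w => f w / P w) with hgdef
  -- the open set where f is nonvanishing
  have hVopen : IsOpen (Ω ∩ f ⁻¹' ({0}ᶜ)) :=
    hf.continuousOn.isOpen_inter_preimage hop isOpen_compl_singleton
  have hgA : ∀ z ∈ Ω, f z ≠ 0 → g z = f z / P z := by
    intro z hz hfz
    have hfc : ContinuousAt f z := (hf.differentiableAt (hop.mem_nhds hz)).continuousAt
    have hPc : ContinuousAt P z := hPdiff.continuous.continuousAt
    have ht : Tendsto (fun w => f w / P w) (nhdsWithin z {z}ᶜ) (nhds (f z / P z)) :=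
      ((hfc.div hPc (hPne z hz hfz)).tendsto).mono_left nhdsWithin_le_nhds
    exact ht.limUnder_eq
  -- local structure of g near every point of Ω
  have hgB : ∀ z ∈ Ω, ∃ h : ℂ → ℂ, AnalyticAt ℂ h z ∧ h z ≠ 0 ∧ g =ᶠ[nhds z] h := by
    intro z hz
    by_cases hfz : f z = 0
    · -- zero of f
      obtain ⟨u, huA, hu0, huf⟩ := hmult z hz hfz
      set S : Finset (Fin n) := Finset.univ.filter (fun j => a j = z) with hSdef
      set m : ℕ := ({j : Fin n | a j = z}).ncard with hmdef
      have hcard : m = S.card := by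
        have h1 : {j : Fin n | a j = z} = ↑S := by ext j; simp [hSdef]
        rw [hmdef, h1, Set.ncard_coe_finset]
      set Q : ℂ → ℂ := fun w => ∏ j ∈ Sᶜ, (w - a j) with hQdef
      have hQdiff : Differentiable ℂ Q := by
        apply Differentiable.fun_finsetProd
        intro j _
        exact differentiable_id.sub_const _
      have hQz : Q z ≠ 0 := by
        apply Finset.prod_ne_zero_iff.mpr
        intro j hj
        have : ¬ (a j = z) := by simpa [hSdef] using hj
        exact sub_ne_zero.mpr (Ne.symm this)
      have hPfact : ∀ w, P w = (w - z) ^ m * Q w := by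
        intro w
        have h1 : (∏ j ∈ S, (w - a j)) * ∏ j ∈ Sᶜ, (w - a j) = P w :=
          Finset.prod_mul_prod_compl S _
        have h2 : (∏ j ∈ S, (w - a j)) = (w - z) ^ m := by
          rw [hcard]
          rw [← Finset.prod_const]
          apply Finset.prod_congr rfl
          intro j hj
          have : a j = z := by simpa [hSdef] using hj
          rw [this]
        rw [← h1, h2]
      set h : ℂ → ℂ := fun w => u w / Q w with hhdef
      have hhA : AnalyticAt ℂ h z := huA.div ((hQdiff.analyticAt z)) hQz
      have hh0 : h z ≠ 0 := div_ne_zero hu0 hQz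
      -- eventual equality on the punctured neighborhood
      have hev : ∀ᶠ w in nhdsWithin z {z}ᶜ, f w = (w - z) ^ m * u w ∧ u w ≠ 0 ∧
          w ∈ Ω ∧ w ≠ z := by
        have e1 : ∀ᶠ w in nhds z, f w = (w - z) ^ m * u w := huf
        have e2 : ∀ᶠ w in nhds z, u w ≠ 0 := huA.continuousAt.eventually_ne hu0
        have e3 : ∀ᶠ w in nhds z, w ∈ Ω := hop.mem_nhds hz
        have := (e1.and (e2.and e3)).filter_mono (nhdsWithin_le_nhds (s := {z}ᶜ))
        filter_upwards [this, self_mem_nhdsWithin] with w hw hwz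
        exact ⟨hw.1, hw.2.1, hw.2.2, hwz⟩
      have hfPh : ∀ᶠ w in nhdsWithin z {z}ᶜ, f w / P w = h w := by
        filter_upwards [hev] with w ⟨hw1, hw2, hw3, hw4⟩
        rw [hw1, hPfact w, hhdef]
        exact mul_div_mul_left _ _ (pow_ne_zero m (sub_ne_zero.mpr hw4))
      have hgh : ∀ᶠ w in nhdsWithin z {z}ᶜ, g w = h w := by
        filter_upwards [hev, hfPh] with w ⟨hw1, hw2, hw3, hw4⟩ hw5
        have hfw : f w ≠ 0 := by
          rw [hw1]
          exact mul_ne_zero (pow_ne_zero m (sub_ne_zero.mpr hw4)) hw2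
        rw [hgA w hw3 hfw, hw5]
      -- limit of f/P at z is h z
      have hgz : g z = h z := by
        have hth : Tendsto h (nhdsWithin z {z}ᶜ) (nhds (h z)) :=
          (hhA.continuousAt.tendsto).mono_left nhdsWithin_le_nhds
        have : Tendsto (fun w => f w / P w) (nhdsWithin z {z}ᶜ) (nhds (h z)) :=
          hth.congr' (by filter_upwards [hfPh] with w hw using hw.symm)
        exact this.limUnder_eq
      refine ⟨h, hhA, hh0, ?_⟩
      have hsup : nhds z = nhdsWithin z {z}ᶜ ⊔ pure z :=
        (nhdsNE_sup_pure z).symm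
      rw [Filter.EventuallyEq, hsup, eventually_sup]
      exact ⟨hgh, by simpa using hgz⟩
    · -- f z ≠ 0
      refine ⟨fun w => f w / P w, ?_, div_ne_zero hfz (hPne z hz hfz), ?_⟩
      · exact (hf.analyticAt (hop.mem_nhds hz)).div (hPdiff.analyticAt z) (hPne z hz hfz)
      · filter_upwards [hVopen.mem_nhds ⟨hz, hfz⟩] with w hw
        exact hgA w hw.1 hw.2
  have hgAnalytic : ∀ z ∈ Ω, AnalyticAt ℂ g z := by
    intro z hz
    obtain ⟨h, hhA, _, hgh⟩ := hgB z hz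
    exact hhA.congr hgh.symm
  have hgne : ∀ z ∈ Ω, g z ≠ 0 := by
    intro z hz
    obtain ⟨h, _, hh0, hgh⟩ := hgB z hz
    rw [hgh.eq_of_nhds]
    exact hh0
  -- log |g| is harmonic on Ω
  have hlogg : HarmonicOnSet (fun z => Real.log (‖g z‖)) Ω := by
    apply harmonicOnSet_of_locally hop
    intro z hz
    have hgc : ContinuousAt g z := (hgAnalytic z hz).continuousAt
    have hgz0 : g z ≠ 0 := hgne z hz
    have h0 : Tendsto (fun w => ‖g w - g z‖) (nhds z) (nhds 0) := by
      have h0' : Tendsto (fun w => g w - g z) (nhds z) (nhds 0) := by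
        simpa using hgc.tendsto.sub_const (g z)
      simpa [Function.comp_def] using (continuous_norm.tendsto 0).comp h0'
    have hev : ∀ᶠ w in nhds z, ‖g w - g z‖ < ‖g z‖ / 2 :=
      h0.eventually_lt_const (half_pos (norm_pos_iff.mpr hgz0))
    refine ⟨Ω ∩ {w | ‖g w - g z‖ < ‖g z‖ / 2},
      Filter.inter_mem (hop.mem_nhds hz) hev,
      fun w => Complex.log (g w / g z) + (Real.log (‖g z‖) : ℂ), ?_, ?_⟩
    · rintro w ⟨hwΩ, hwb⟩
      have hdg : DifferentiableAt ℂ g w := (hgAnalytic w hwΩ).differentiableAt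
      have hslit : g w / g z ∈ Complex.slitPlane := by
        have h1 : ‖g w / g z - 1‖ < 1 := by
          have he : g w / g z - 1 = (g w - g z) / g z := by field_simp
          rw [he, norm_div, div_lt_one (norm_pos_iff.mpr hgz0)]
          calc ‖g w - g z‖ < ‖g z‖ / 2 := hwb
          _ < ‖g z‖ := half_lt_self (norm_pos_iff.mpr hgz0)
        have h2 : |(g w / g z).re - 1| < 1 := by
          have := Complex.abs_re_le_norm (g w / g z - 1)
          simp only [Complex.sub_re, Complex.one_re] at this
          exact lt_of_le_of_lt this h1
        have h3 := abs_lt.mp h2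
        exact Complex.mem_slitPlane_iff.mpr (Or.inl (by linarith [h3.1]))
      exact ((hdg.div_const (g z)).clog hslit).add_const _
    · rintro w ⟨hwΩ, hwb⟩
      have hgw : g w ≠ 0 := hgne w hwΩ
      have hgz : g z ≠ 0 := hgne z hz
      simp only [Complex.add_re, Complex.ofReal_re, Complex.log_re, norm_div]
      rw [Real.log_div (norm_ne_zero_iff.mpr hgw) (norm_ne_zero_iff.mpr hgz)]
      ring
  -- the harmonic candidate
  set U : Fin n → ℂ → ℝ := fun j => Classical.choose (hG.harmonic_ext (a j) (ha j)) with hUdef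
  have hUspec : ∀ j, HarmonicOnSet (U j) Ω ∧
      ∀ z ∈ Ω, z ≠ a j → U j z = G z (a j) + Real.log (‖z - a j‖) :=
    fun j => Classical.choose_spec (hG.harmonic_ext (a j) (ha j))
  set H : ℂ → ℝ := fun z => (∑ j, U j z) + Real.log (‖g z‖) with hHdef
  have hHharm : HarmonicOnSet H Ω :=
    (harmonicOnSet_sum hop Finset.univ U (fun j _ => (hUspec j).1)).add hlogg
  -- pointwise identity away from the zeros
  have hHeq : ∀ z ∈ Ω, f z ≠ 0 →
      H z = Real.log (‖f z‖) + ∑ j, G z (a j) := by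
    intro z hz hfz
    have hnot : ∀ j, z ≠ a j := by
      have : ¬ ∃ j, z = a j := fun h => hfz ((hzeros z hz).mpr h)
      push_neg at this; exact this
    have hPz : P z ≠ 0 := hPne z hz hfz
    have hlogP : Real.log (‖P z‖) = ∑ j, Real.log (‖z - a j‖) := by
      rw [hPdef]
      simp only [norm_prod]
      exact Real.log_prod fun j _ =>
        norm_ne_zero_iff.mpr (sub_ne_zero.mpr (hnot j))
    have hgz : Real.log (‖g z‖) =
        Real.log (‖f z‖) - ∑ j, Real.log (‖z - a j‖) := by
      rw [hgA z hz hfz, norm_div,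
        Real.log_div (norm_ne_zero_iff.mpr hfz) (norm_ne_zero_iff.mpr hPz), hlogP]
    have hsum : (∑ j, U j z) =
        ∑ j, (G z (a j) + Real.log (‖z - a j‖)) :=
      Finset.sum_congr rfl fun j _ => ((hUspec j).2 z hz (hnot j))
    rw [hHdef]
    simp only [hsum, hgz, Finset.sum_add_distrib]
    ring
  -- boundary behavior of H
  have hHbdry : ∀ ζ ∈ frontier Ω, Tendsto H (nhdsWithin ζ Ω) (nhds 0) := by
    intro ζ hζ
    have hζΩ : ζ ∉ Ω := by
      rw [frontier, hop.interior_eq] at hζ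
      exact hζ.2
    -- the sum of Green's functions tends to 0
    have h1 : Tendsto (fun z => ∑ j, G z (a j)) (nhdsWithin ζ Ω) (nhds 0) := by
      have := tendsto_finset_sum Finset.univ
        (fun j _ => hG.boundary_limit (a j) (ha j) ζ hζ)
      simpa using this
    -- |f| tends to 1
    have habs : Tendsto (fun z => ‖f z‖) (nhdsWithin ζ Ω) (nhds 1) := by
      rw [Metric.tendsto_nhds]
      intro ε hε
      set r : ℝ := max (1 - ε) 0 with hrdef
      have hr1 : r < 1 := by
        rw [hrdef]; apply max_lt <;> linarith
      have hK : IsCompact {z ∈ Ω | f z ∈ Metric.closedBall 0 r} :=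
        hproper _ (isCompact_closedBall 0 r) (Metric.closedBall_subset_ball hr1)
      have hKc : {z ∈ Ω | f z ∈ Metric.closedBall 0 r}ᶜ ∈ nhds ζ := by
        apply hK.isClosed.isOpen_compl.mem_nhds
        intro hmem
        exact hζΩ hmem.1
      filter_upwards [Filter.mem_inf_of_left hKc, self_mem_nhdsWithin] with z hzK hzΩ
      have hfz1 : ‖f z‖ < 1 := hlt z hzΩ
      have hfzr : r < ‖f z‖ := by
        by_contra hcon
        push_neg at hcon
        exact hzK ⟨hzΩ, by simpa [Complex.dist_eq] using hcon⟩
      have h1e : 1 - ε ≤ r := le_max_left _ _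
      rw [Real.dist_eq, abs_sub_lt_iff]
      constructor <;> linarith
    have h2 : Tendsto (fun z => Real.log (‖f z‖)) (nhdsWithin ζ Ω) (nhds 0) := by
      have := (Real.continuousAt_log one_ne_zero).tendsto.comp habs
      simpa [Function.comp_def] using this
    -- H agrees with log|f| + ∑ G near the boundary
    have h3 : ∀ᶠ z in nhdsWithin ζ Ω,
        H z = Real.log (‖f z‖) + ∑ j, G z (a j) := by
      have hne' : ∀ᶠ z in nhds ζ, ∀ j, z ≠ a j := by
        apply eventually_all.mpr
        intro j
        exact eventually_ne_nhds (fun h => hζΩ (h ▸ ha j))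
      filter_upwards [Filter.mem_inf_of_left hne', self_mem_nhdsWithin] with z hz hzΩ
      have hfz : f z ≠ 0 := by
        intro h
        obtain ⟨j, hj⟩ := (hzeros z hzΩ).mp h
        exact hz j hj
      exact hHeq z hzΩ hfz
    have := (h2.add h1).congr' (by filter_upwards [h3] with z hz using hz.symm)
    simpa using this
  -- conclude
  have hzero := harmonic_zero_of_boundary hne hop hconn hbd hHharm hHbdry
  intro z hz hfz
  have h1 := hzero z hz
  rw [hHeq z hz hfz] at h1
  linarith
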